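/- arXiv:1901.06880 — 9 statements merged into one kernel-verified Lean document; each statement's English description precedes it below -/
import Mathlib

section
/- If a vector y ∈ ℝ^J satisfies positivity (y_j ≥ p_j for all j ∈ J) and non-overlapping (for all i ≠ j in J, y_j ≥ y_i + p_j or y_i ≥ y_j + p_i), then y satisfies the Queyranne inequalities (Q): for every subset S ⊆ J, ∑_{i∈S} p_i y_i ≥ g_p(S). -/
/-!
Order the jobs of `S` by `y`. The last one, `j`, has `y j ≥ p(S)`: by non-overlapping each job
ends at least its processing time after the previous one, and by positivity the first one ends at
least its processing time after `0`. Adding `j` to `S \ {j}` raises the left side of (Q) by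
`p j * y j ≥ p j * p(S)`, which is exactly `g_p(S) - g_p(S \ {j})`, so (Q) follows by induction
along this order.
-/

open Finset

section Scheduling

variable {ι : Type*} [DecidableEq ι] {p y : ι → ℝ}

theorem add_sum_le_of_forall_le (hp : ∀ j, 0 < p j) (hpos : ∀ j, p j ≤ y j)
    (hnov : ∀ i j : ι, i ≠ j → y j ≥ y i + p j ∨ y i ≥ y j + p i)
    (S : Finset ι) : ∀ j ∉ S, (∀ i ∈ S, y i ≤ y j) → p j + ∑ i ∈ S, p i ≤ y j := by
  induction S using Finset.induction_on_max_value y with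
  | empty => simpa using hpos
  | insert a s ha hmax_a ih =>
    intro j hj hmax_j
    have haj : a ≠ j := by rintro rfl; exact hj (mem_insert_self a s)
    have hya : y a ≤ y j := hmax_j a (mem_insert_self a s)
    have hj_after_a : y a + p j ≤ y j := by
      rcases hnov a j haj with h | h
      · exact h
      · linarith [hp a]
    have hs := ih a ha hmax_a
    rw [sum_insert ha]
    linarith

theorem queyranne_inequality (hp : ∀ j, 0 < p j) (hpos : ∀ j, p j ≤ y j)
    (hnov : ∀ i j : ι, i ≠ j → y j ≥ y i + p j ∨ y i ≥ y j + p i) (S : Finset ι) :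
    (∑ j ∈ S, p j) ^ 2 / 2 + (∑ j ∈ S, p j ^ 2) / 2 ≤ ∑ i ∈ S, p i * y i := by
  induction S using Finset.induction_on_max_value y with
  | empty => simp
  | insert a s ha hmax ih =>
    have hya : p a * (p a + ∑ i ∈ s, p i) ≤ p a * y a :=
      mul_le_mul_of_nonneg_left (add_sum_le_of_forall_le hp hpos hnov s a ha hmax) (hp a).le
    simp only [sum_insert ha]
    linarith

end Scheduling

theorem stmt_0_general {J : Type*} (p y : J → ℝ)
    (hp : ∀ j, 0 < p j)
    (hpos : ∀ j, p j ≤ y j)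
    (hnov : ∀ i j : J, i ≠ j → y j ≥ y i + p j ∨ y i ≥ y j + p i) :
    ∀ S : Finset J,
      ∑ i ∈ S, p i * y i ≥ (∑ j ∈ S, p j) ^ 2 / 2 + (∑ j ∈ S, (p j) ^ 2) / 2 := by
  classical
  exact queyranne_inequality hp hpos hnov

/-- If `y` satisfies positivity and non-overlapping, then it satisfies
the Queyranne inequalities (Q): for every subset `S ⊆ J`,
`∑_{i∈S} p_i y_i ≥ g_p(S) = ½(∑_{j∈S} p_j)² + ½ ∑_{j∈S} p_j²`. -/
theorem stmt_0 {J : Type*} [Fintype J] (p y : J → ℝ)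
    (hp : ∀ j, 0 < p j)
    (hpos : ∀ j, p j ≤ y j)
    (hnov : ∀ i j : J, i ≠ j → y j ≥ y i + p j ∨ y i ≥ y j + p i) :
    ∀ S : Finset J,
      ∑ i ∈ S, p i * y i ≥ (∑ j ∈ S, p j) ^ 2 / 2 + (∑ j ∈ S, (p j) ^ 2) / 2 :=
  stmt_0_general p y hp hpos hnov
end

section
/- Let y ∈ ℝ^J satisfy the Queyranne inequalities (Q), and let i, j ∈ J with y_i ≤ y_j. Then for every subset S ⊆ J with i ∉ S and j ∈ S, the inequality (Q) associated to S is strict: ∑_{k∈S} p_k y_k > g_p(S). -/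
/-- `g_p(S) = ½(∑_{j∈S} p_j)² + ½ ∑_{j∈S} p_j²`. -/
noncomputable def gp {J : Type*} (p : J → ℝ) (S : Finset J) : ℝ :=
  (∑ j ∈ S, p j) ^ 2 / 2 + (∑ j ∈ S, (p j) ^ 2) / 2

/-- If `y` satisfies the Queyranne inequalities (Q) and `y_i ≤ y_j`,
then the inequality (Q) is strict for every `S` with `i ∉ S` and `j ∈ S`. -/
theorem stmt_1 {J : Type*} [Fintype J] (p y : J → ℝ)
    (hp : ∀ j, 0 < p j)
    (hQ : ∀ S : Finset J, ∑ k ∈ S, p k * y k ≥ gp p S)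
    (i j : J) (hij : y i ≤ y j) :
    ∀ S : Finset J, i ∉ S → j ∈ S → ∑ k ∈ S, p k * y k > gp p S := by
  classical
  intro S hiS hjS
  by_contra h
  push_neg at h
  have heq : ∑ k ∈ S, p k * y k = gp p S := le_antisymm h (hQ S)
  set S' := S.erase j with hS'
  have hjS' : j ∉ S' := Finset.notMem_erase j S
  have hSins : S = insert j S' := (Finset.insert_erase hjS).symm
  have hiS' : i ∉ S' := fun hm => hiS (Finset.mem_of_mem_erase hm)
  have hji : i ≠ j := fun h' => hiS (h' ▸ hjS)
  have hiIns : i ∉ insert j S' := by simp [hji, hiS']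
  have h2 := hQ S'
  have h3 := hQ (insert i (insert j S'))
  rw [hSins] at heq
  unfold gp at heq h2 h3
  rw [Finset.sum_insert hjS', Finset.sum_insert hjS', Finset.sum_insert hjS'] at heq
  rw [Finset.sum_insert hiIns, Finset.sum_insert hiIns, Finset.sum_insert hiIns,
    Finset.sum_insert hjS', Finset.sum_insert hjS', Finset.sum_insert hjS'] at h3
  have hpi := hp i
  have hpj := hp j
  set A := ∑ k ∈ S', p k * y k
  set P := ∑ k ∈ S', p k
  set Q := ∑ k ∈ S', (p k) ^ 2
  nlinarith [mul_pos hpi hpj, mul_le_mul_of_nonneg_left hij (le_of_lt (mul_pos hpi hpj))]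
end

section
/- Let y ∈ ℝ^J satisfy the Queyranne inequalities (Q). If there exist i, j ∈ J with i ≠ j such that y_i ≤ y_j < y_i + p_j, then there exists ε > 0 such that both vectors y^{+-} = y + (ε/p_i)·1_i − (ε/p_j)·1_j and y^{-+} = y − (ε/p_i)·1_i + (ε/p_j)·1_j also satisfy the inequalities (Q) (here 1_k denotes the vector in ℝ^J with value 1 at coordinate k and 0 elsewhere). -/
/-- The vector `1_k ∈ ℝ^J` with value `1` at coordinate `k` and `0` elsewhere. -/
def ind {J : Type*} [DecidableEq J] (k : J) : J → ℝ := fun l => if l = k then 1 else 0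

lemma gp_insert {J : Type*} [DecidableEq J] (p : J → ℝ) {a : J} {T : Finset J} (ha : a ∉ T) :
    gp p (insert a T) = gp p T + p a * (∑ k ∈ T, p k) + p a ^ 2 := by
  simp only [gp, Finset.sum_insert ha]
  ring

lemma sum_ind {J : Type*} [DecidableEq J] (p : J → ℝ) (S : Finset J) (a : J) :
    ∑ k ∈ S, p k * ind a k = if a ∈ S then p a else 0 := by
  simp only [ind, mul_ite, mul_one, mul_zero]
  exact Finset.sum_ite_eq' S a p

/-- If the inequality for `S` is tight and `a ∉ S`, then `y a ≥ p(S) + p a`. -/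
lemma up {J : Type*} [Fintype J] [DecidableEq J] (p y : J → ℝ)
    (hp : ∀ j, 0 < p j)
    (hQ : ∀ S : Finset J, ∑ k ∈ S, p k * y k ≥ gp p S)
    {a : J} {S : Finset J} (ha : a ∉ S)
    (heq : ∑ k ∈ S, p k * y k = gp p S) :
    (∑ k ∈ S, p k) + p a ≤ y a := by
  have h := hQ (insert a S)
  rw [Finset.sum_insert ha, gp_insert p ha, heq] at h
  have hpa := hp a
  have h3 : p a * ((∑ k ∈ S, p k) + p a) ≤ p a * y a := by nlinarith
  exact le_of_mul_le_mul_left h3 hpa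

/-- If the inequality for `S` is tight and `b ∈ S`, then `y b ≤ p(S)`. -/
lemma down {J : Type*} [Fintype J] [DecidableEq J] (p y : J → ℝ)
    (hp : ∀ j, 0 < p j)
    (hQ : ∀ S : Finset J, ∑ k ∈ S, p k * y k ≥ gp p S)
    {b : J} {S : Finset J} (hb : b ∈ S)
    (heq : ∑ k ∈ S, p k * y k = gp p S) :
    y b ≤ ∑ k ∈ S, p k := by
  have h := hQ (S.erase b)
  have hins : insert b (S.erase b) = S := Finset.insert_erase hb
  have hnb : b ∉ S.erase b := Finset.notMem_erase b S
  have heq' : p b * y b + ∑ k ∈ S.erase b, p k * y k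
      = gp p (S.erase b) + p b * (∑ k ∈ S.erase b, p k) + p b ^ 2 := by
    have h0 := heq
    rw [← hins, Finset.sum_insert hnb, gp_insert p hnb] at h0
    exact h0
  have hsum : (∑ k ∈ S, p k) = p b + ∑ k ∈ S.erase b, p k := by
    rw [← Finset.sum_insert hnb, hins]
  have hpb := hp b
  have h3 : p b * y b ≤ p b * (∑ k ∈ S, p k) := by nlinarith
  exact le_of_mul_le_mul_left h3 hpb

/-- If `y` satisfies (Q) and `y_i ≤ y_j < y_i + p_j` for some `i ≠ j`,
then there is `ε > 0` such that `y + (ε/p_i)·1_i − (ε/p_j)·1_j` and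
`y − (ε/p_i)·1_i + (ε/p_j)·1_j` also satisfy (Q). -/
theorem stmt_2 {J : Type*} [Fintype J] [DecidableEq J] (p y : J → ℝ)
    (hp : ∀ j, 0 < p j)
    (hQ : ∀ S : Finset J, ∑ k ∈ S, p k * y k ≥ gp p S)
    (i j : J) (hne : i ≠ j) (h₁ : y i ≤ y j) (h₂ : y j < y i + p j) :
    ∃ ε : ℝ, 0 < ε ∧
      (∀ S : Finset J,
        ∑ k ∈ S, p k * (y k + (ε / p i) * ind i k - (ε / p j) * ind j k) ≥ gp p S) ∧
      (∀ S : Finset J,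
        ∑ k ∈ S, p k * (y k - (ε / p i) * ind i k + (ε / p j) * ind j k) ≥ gp p S) := by
  classical
  -- slack is strictly positive on sets containing exactly one of i, j
  have slack_pos : ∀ S : Finset J, ((i ∈ S ∧ j ∉ S) ∨ (j ∈ S ∧ i ∉ S)) →
      0 < (∑ k ∈ S, p k * y k) - gp p S := by
    intro S h
    by_contra hc
    push_neg at hc
    have heq : ∑ k ∈ S, p k * y k = gp p S := le_antisymm (by linarith) (hQ S)
    rcases h with ⟨hiS, hjS⟩ | ⟨hjS, hiS⟩
    · have hj := up p y hp hQ hjS heq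
      have hi := down p y hp hQ hiS heq
      linarith
    · have hi := up p y hp hQ hiS heq
      have hj := down p y hp hQ hjS heq
      have := hp i
      linarith
  set F : Finset (Finset J) :=
    Finset.univ.powerset.filter (fun S => (i ∈ S ∧ j ∉ S) ∨ (j ∈ S ∧ i ∉ S)) with hF
  have hFne : F.Nonempty := by
    refine ⟨{i}, ?_⟩
    simp [hF, Finset.mem_filter, hne, Ne.symm hne]
  set ε : ℝ := F.inf' hFne (fun S => (∑ k ∈ S, p k * y k) - gp p S) with hε
  have hεpos : 0 < ε := by
    rw [hε, Finset.lt_inf'_iff]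
    intro S hS
    rw [hF, Finset.mem_filter] at hS
    exact slack_pos S hS.2
  have hεle : ∀ S : Finset J, ((i ∈ S ∧ j ∉ S) ∨ (j ∈ S ∧ i ∉ S)) →
      ε ≤ (∑ k ∈ S, p k * y k) - gp p S := by
    intro S h
    apply Finset.inf'_le
    rw [hF, Finset.mem_filter]
    exact ⟨Finset.mem_powerset.mpr (Finset.subset_univ S), h⟩
  have hpi : p i ≠ 0 := (hp i).ne'
  have hpj : p j ≠ 0 := (hp j).ne'
  have hcanc_i : ε / p i * p i = ε := div_mul_cancel₀ ε hpi
  have hcanc_j : ε / p j * p j = ε := div_mul_cancel₀ ε hpj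
  refine ⟨ε, hεpos, ?_, ?_⟩
  · intro S
    have e1 : ∑ k ∈ S, p k * (y k + (ε / p i) * ind i k - (ε / p j) * ind j k)
        = (∑ k ∈ S, p k * y k) + (ε / p i) * (∑ k ∈ S, p k * ind i k)
          - (ε / p j) * (∑ k ∈ S, p k * ind j k) := by
      rw [Finset.mul_sum, Finset.mul_sum, ← Finset.sum_add_distrib, ← Finset.sum_sub_distrib]
      exact Finset.sum_congr rfl fun k _ => by ring
    rw [e1, sum_ind, sum_ind]
    by_cases hiS : i ∈ S <;> by_cases hjS : j ∈ S <;>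
      simp only [hiS, hjS, if_true, if_false, mul_zero]
    · have := hQ S
      rw [div_mul_cancel₀ ε hpi, div_mul_cancel₀ ε hpj]
      linarith
    · have := hεle S (Or.inl ⟨hiS, hjS⟩)
      rw [div_mul_cancel₀ ε hpi]
      linarith
    · have := hεle S (Or.inr ⟨hjS, hiS⟩)
      rw [div_mul_cancel₀ ε hpj]
      linarith [hQ S]
    · have := hQ S
      linarith
  · intro S
    have e1 : ∑ k ∈ S, p k * (y k - (ε / p i) * ind i k + (ε / p j) * ind j k)
        = (∑ k ∈ S, p k * y k) - (ε / p i) * (∑ k ∈ S, p k * ind i k)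
          + (ε / p j) * (∑ k ∈ S, p k * ind j k) := by
      rw [Finset.mul_sum, Finset.mul_sum, ← Finset.sum_sub_distrib, ← Finset.sum_add_distrib]
      exact Finset.sum_congr rfl fun k _ => by ring
    rw [e1, sum_ind, sum_ind]
    by_cases hiS : i ∈ S <;> by_cases hjS : j ∈ S <;>
      simp only [hiS, hjS, if_true, if_false, mul_zero]
    · have := hQ S
      rw [div_mul_cancel₀ ε hpi, div_mul_cancel₀ ε hpj]
      linarith
    · have := hεle S (Or.inl ⟨hiS, hjS⟩)
      rw [div_mul_cancel₀ ε hpi]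
      linarith [hQ S]
    · have := hεle S (Or.inr ⟨hjS, hiS⟩)
      rw [div_mul_cancel₀ ε hpj]
      linarith
    · have := hQ S
      linarith
end

section
/- Let y ∈ ℝ^J satisfy the Queyranne inequalities (Q). If there exist i, j ∈ J with i ≠ j such that y_j < y_i + p_j and y_j ≥ p(J), then there exists ε > 0 such that the vector y − (ε/p_j)·1_j also satisfies the inequalities (Q) (here 1_j denotes the vector in ℝ^J with value 1 at coordinate j and 0 elsewhere). -/
/-!
Every Queyranne inequality whose set contains `j` is strict, so lowering `p_j y_j` by the
smallest of the finitely many slacks keeps all of them valid.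

Removing an element `a` from `S` splits the slack of `S` as
`p_a (y_a - p(S)) + slack(S \ {a})`. If `i ∉ S` then `p(S) < p(J) ≤ y_j`, so the first term
for `a = j` is positive. If `i ∈ S`, that term is only nonnegative, but removing then `i` from
`R = S \ {j}` gives the positive term `p_i (y_i - p(R))`, since `y_i > y_j - p_j ≥ p(S) - p_j = p(R)`.
-/

open Finset

noncomputable def slack {J : Type*} (p y : J → ℝ) (S : Finset J) : ℝ :=
  ∑ k ∈ S, p k * y k - gp p S

section

variable {J : Type*} [DecidableEq J] (p y : J → ℝ)

theorem slack_eq_of_mem {S : Finset J} {a : J} (ha : a ∈ S) :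
    slack p y S = p a * (y a - ∑ k ∈ S, p k) + slack p y (S.erase a) := by
  have hsplit (f : J → ℝ) : ∑ k ∈ S, f k = f a + ∑ k ∈ S.erase a, f k :=
    (add_sum_erase S f ha).symm
  simp only [slack, gp]
  rw [hsplit fun k => p k * y k, hsplit p, hsplit fun k => p k ^ 2]
  ring

theorem sum_mul_sub_smul_ind (c : ℝ) (j : J) (S : Finset J) :
    ∑ k ∈ S, p k * (y k - c * ind j k) = ∑ k ∈ S, p k * y k - if j ∈ S then p j * c else 0 := by
  simp only [mul_sub, sum_sub_distrib, ind, mul_ite, mul_one, mul_zero, sum_ite_eq']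

end

theorem Finite.exists_pos_forall_le {α : Type*} [Finite α] {P : α → Prop} {f : α → ℝ}
    (hf : ∀ a, P a → 0 < f a) : ∃ ε, 0 < ε ∧ ∀ a, P a → ε ≤ f a := by
  classical
  have := Fintype.ofFinite α
  by_cases hs : (univ.filter P).Nonempty
  · obtain ⟨a, ha, hmin⟩ := (univ.filter P).exists_min_image f hs
    exact ⟨f a, hf a (mem_filter.mp ha).2, fun b hb => hmin b (mem_filter.mpr ⟨mem_univ b, hb⟩)⟩
  · refine ⟨1, one_pos, fun a ha => absurd ⟨a, mem_filter.mpr ⟨mem_univ a, ha⟩⟩ hs⟩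

theorem slack_pos_of_mem {J : Type*} [Fintype J] [DecidableEq J] {p y : J → ℝ}
    (hp : ∀ j, 0 < p j) (hQ : ∀ S : Finset J, 0 ≤ slack p y S)
    {i j : J} (hne : i ≠ j) (h₁ : y j < y i + p j) (h₂ : ∑ k, p k ≤ y j)
    {S : Finset J} (hjS : j ∈ S) : 0 < slack p y S := by
  have hsum_le (T : Finset J) : ∑ k ∈ T, p k ≤ ∑ k, p k :=
    sum_le_sum_of_subset_of_nonneg (subset_univ T) fun k _ _ => (hp k).le
  rw [slack_eq_of_mem p y hjS]
  by_cases hiS : i ∈ S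
  · have hiR : i ∈ S.erase j := mem_erase.mpr ⟨hne, hiS⟩
    have hR : ∑ k ∈ S.erase j, p k = ∑ k ∈ S, p k - p j := by
      rw [← add_sum_erase S p hjS]; ring
    have hyi : ∑ k ∈ S.erase j, p k < y i := by linarith [hsum_le S]
    rw [slack_eq_of_mem p y hiR]
    have := mul_pos (hp i) (sub_pos.mpr hyi)
    have := mul_nonneg (hp j).le (sub_nonneg.mpr ((hsum_le S).trans h₂))
    linarith [hQ ((S.erase j).erase i)]
  · have hS : ∑ k ∈ S, p k + p i ≤ ∑ k, p k := by
      simpa [sum_insert hiS, add_comm] using hsum_le (insert i S)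
    have := mul_pos (hp j) (sub_pos.mpr (show ∑ k ∈ S, p k < y j by linarith [hp i]))
    linarith [hQ (S.erase j)]

/-- If `y` satisfies (Q), and `i ≠ j` are such that `y_j < y_i + p_j`
and `y_j ≥ p(J)`, then there is `ε > 0` such that `y − (ε/p_j)·1_j` also satisfies (Q). -/
theorem stmt_3 {J : Type*} [Fintype J] [DecidableEq J] (p y : J → ℝ)
    (hp : ∀ j, 0 < p j)
    (hQ : ∀ S : Finset J, ∑ k ∈ S, p k * y k ≥ gp p S)
    (i j : J) (hne : i ≠ j) (h₁ : y j < y i + p j) (h₂ : y j ≥ ∑ k, p k) :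
    ∃ ε : ℝ, 0 < ε ∧
      ∀ S : Finset J, ∑ k ∈ S, p k * (y k - (ε / p j) * ind j k) ≥ gp p S := by
  have hslack (S : Finset J) : 0 ≤ slack p y S := sub_nonneg.mpr (hQ S)
  obtain ⟨ε, hε, hεle⟩ := Finite.exists_pos_forall_le (P := fun S : Finset J => j ∈ S)
    fun S hjS => slack_pos_of_mem hp hslack hne h₁ h₂ hjS
  refine ⟨ε, hε, fun S => ?_⟩
  rw [sum_mul_sub_smul_ind, mul_div_cancel₀ ε (hp j).ne']
  split_ifs with hjS
  · linarith [hεle S hjS, show slack p y S = ∑ k ∈ S, p k * y k - gp p S from rfl]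
  · simpa using hQ S
end

section
/- Let α, β ∈ ℝ^J with α_j ≥ 0 and β_j ≥ 0 for all j. (a) For every feasible schedule C there exists a block C' with f_{α,β}(C') ≤ f_{α,β}(C). (b) If moreover α_j > 0 and β_j > 0 for all j, then every feasible schedule C that minimizes f_{α,β} over all feasible schedules is a block. -/
open Finset

/-- A feasible schedule: positivity and non-overlapping. -/
def Feasible {J : Type*} (p C : J → ℝ) : Prop :=
  (∀ j, p j ≤ C j) ∧ ∀ i j : J, i ≠ j → C j ≥ C i + p j ∨ C i ≥ C j + p i

/-- Total earliness-tardiness penalty `f_{α,β}(C)`. -/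
noncomputable def penalty {J : Type*} [Fintype J] (α β : J → ℝ) (d : ℝ) (C : J → ℝ) : ℝ :=
  ∑ j, (α j * max (d - C j) 0 + β j * max (C j - d) 0)

/-- A block: a feasible schedule without idle time. -/
def IsBlock {J : Type*} [Fintype J] [Nonempty J] (p C : J → ℝ) : Prop :=
  Feasible p C ∧
    (univ.sup' univ_nonempty C - univ.inf' univ_nonempty (fun j => C j - p j)) = ∑ j, p j

lemma pen_le (a b mm x y : ℝ) (ha : 0 ≤ a) (hb : 0 ≤ b)
    (h : x = y ∨ (x < y ∧ y ≤ mm) ∨ (mm ≤ y ∧ y < x)) :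
    a * max (mm - y) 0 + b * max (y - mm) 0 ≤ a * max (mm - x) 0 + b * max (x - mm) 0 := by
  rcases h with rfl | ⟨h1, h2⟩ | ⟨h1, h2⟩
  · exact le_rfl
  · rw [max_eq_left (by linarith), max_eq_right (by linarith),
      max_eq_left (by linarith), max_eq_right (by linarith)]
    nlinarith
  · rw [max_eq_right (by linarith), max_eq_left (by linarith),
      max_eq_right (by linarith), max_eq_left (by linarith)]
    nlinarith

lemma pen_lt (a b mm x y : ℝ) (ha : 0 < a) (hb : 0 < b)
    (h : (x < y ∧ y ≤ mm) ∨ (mm ≤ y ∧ y < x)) :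
    a * max (mm - y) 0 + b * max (y - mm) 0 < a * max (mm - x) 0 + b * max (x - mm) 0 := by
  rcases h with ⟨h1, h2⟩ | ⟨h1, h2⟩
  · rw [max_eq_left (by linarith), max_eq_right (by linarith),
      max_eq_left (by linarith), max_eq_right (by linarith)]
    nlinarith
  · rw [max_eq_right (by linarith), max_eq_left (by linarith),
      max_eq_right (by linarith), max_eq_left (by linarith)]
    nlinarith

lemma key_lemma {J : Type*} [Fintype J] [Nonempty J] (p : J → ℝ) (hp : ∀ j, 0 < p j)
    (d : ℝ) (α β : J → ℝ) (hα : ∀ j, 0 ≤ α j) (hβ : ∀ j, 0 ≤ β j)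
    (C : J → ℝ) (hC : Feasible p C) :
    ∃ C' : J → ℝ, IsBlock p C' ∧ penalty α β d C' ≤ penalty α β d C ∧
      ((∀ j, 0 < α j) → (∀ j, 0 < β j) → ¬ IsBlock p C → penalty α β d C' < penalty α β d C) := by
  classical
  -- C is injective
  have hCinj : Function.Injective C := by
    intro a b hab
    by_contra hne
    rcases hC.2 a b hne with h | h
    · have := hp b; rw [hab] at h; linarith
    · have := hp a; rw [hab] at h; linarith
  letI : LinearOrder J := LinearOrder.lift' C hCinj
  set n := Fintype.card J with hn_def
  have hn : 0 < n := Fintype.card_pos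
  let e : Fin n ≃o J := monoEquivOfFin J rfl
  -- the processing times along the sorted order, as a ℕ-indexed sequence
  let q : ℕ → ℝ := fun m => if h : m < n then p (e ⟨m, h⟩) else 0
  have hq0 : ∀ m, 0 ≤ q m := by
    intro m; simp only [q]
    split
    · exact (hp _).le
    · exact le_rfl
  let S : ℕ → ℝ := fun m => ∑ i ∈ Finset.range (m + 1), q i
  let idx : J → ℕ := fun j => (e.symm j).val
  have hidx_lt : ∀ j, idx j < n := fun j => (e.symm j).isLt
  let s : J → ℝ := fun j => C j - S (idx j)
  -- basic facts about S
  have hS_mono : ∀ {k l : ℕ}, k ≤ l → S k ≤ S l := by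
    intro k l hkl
    exact Finset.sum_le_sum_of_subset_of_nonneg
      (Finset.range_subset_range.2 (by omega)) (fun i _ _ => hq0 i)
  have hS_step : ∀ {k l : ℕ}, k < l → S k + q l ≤ S l := by
    intro k l hkl
    have : S l = (∑ i ∈ Finset.range l, q i) + q l := Finset.sum_range_succ q l
    have h2 : S k ≤ ∑ i ∈ Finset.range l, q i :=
      Finset.sum_le_sum_of_subset_of_nonneg
        (Finset.range_subset_range.2 (by omega)) (fun i _ _ => hq0 i)
    linarith
  have hqS : ∀ k, q k ≤ S k := by
    intro k
    have : S k = (∑ i ∈ Finset.range k, q i) + q k := Finset.sum_range_succ q k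
    have h2 : 0 ≤ ∑ i ∈ Finset.range k, q i := Finset.sum_nonneg fun i _ => hq0 i
    linarith
  have hq_idx : ∀ j, q (idx j) = p j := by
    intro j
    have h : idx j < n := hidx_lt j
    simp only [q, idx]
    rw [dif_pos h]
    congr 1
    have : (⟨(e.symm j).val, h⟩ : Fin n) = e.symm j := Fin.eta _ _
    rw [this, OrderIso.apply_symm_apply]
  -- C ∘ e is monotone
  have hce : ∀ {a b : Fin n}, a ≤ b → C (e a) ≤ C (e b) := by
    intro a b hab
    exact e.monotone hab
  -- adjacent step
  have F1 : ∀ (k : ℕ) (h : k + 1 < n), C (e ⟨k, by omega⟩) + q (k + 1) ≤ C (e ⟨k + 1, h⟩) := by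
    intro k h
    have hne : e ⟨k, by omega⟩ ≠ e ⟨k + 1, h⟩ := by
      intro hcontra
      have := e.injective hcontra
      simp [Fin.ext_iff] at this
    have hlt : C (e ⟨k, by omega⟩) ≤ C (e ⟨k + 1, h⟩) := hce (by simp [Fin.le_def])
    have hq' : q (k + 1) = p (e ⟨k + 1, h⟩) := by simp only [q]; rw [dif_pos h]
    rcases hC.2 (e ⟨k, by omega⟩) (e ⟨k + 1, h⟩) hne with h' | h'
    · rw [hq']; linarith
    · have := hp (e ⟨k, by omega⟩); linarith
  -- chain inequality
  have F2 : ∀ (m : ℕ) (k l : Fin n), l.val = k.val + m → C (e k) + S l.val ≤ C (e l) + S k.val := by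
    intro m
    induction m with
    | zero =>
      intro k l h
      have : l = k := Fin.ext (by omega)
      subst this
      exact le_rfl
    | succ m ih =>
      intro k l h
      have hl' : k.val + m < n := by omega
      have hl : k.val + m + 1 < n := by omega
      have IH := ih k ⟨k.val + m, hl'⟩ rfl
      have step := F1 (k.val + m) hl
      have hSl : S (k.val + m + 1) = (∑ i ∈ Finset.range (k.val + m + 1), q i) + q (k.val + m + 1) :=
        Finset.sum_range_succ q _
      have hel : e l = e ⟨k.val + m + 1, hl⟩ := congrArg e (Fin.ext (by simp [h]; omega))
      rw [h, hel]
      have : S (k.val + m) = ∑ i ∈ Finset.range (k.val + m + 1), q i := rfl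
      have hadd : k.val + (m + 1) = k.val + m + 1 := by omega
      rw [hadd]
      linarith
  have F2' : ∀ {k l : Fin n}, k ≤ l → C (e k) + S l.val ≤ C (e l) + S k.val := by
    intro k l hkl
    exact F2 (l.val - k.val) k l (by omega)
  -- s is monotone with respect to C-order
  have hs_mono : ∀ {i j : J}, C i ≤ C j → s i ≤ s j := by
    intro i j hij
    have h1 : e.symm i ≤ e.symm j := e.symm.monotone hij
    have h2 := F2' h1
    rw [OrderIso.apply_symm_apply, OrderIso.apply_symm_apply] at h2
    simp only [s, idx]
    linarith
  have hidx_mono : ∀ {i j : J}, C i ≤ C j → idx i ≤ idx j := by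
    intro i j hij
    exact e.symm.monotone hij
  -- s is nonneg
  have h0lt : (0 : ℕ) < n := hn
  have hs_nonneg : ∀ j, 0 ≤ s j := by
    intro j
    have h1 : (⟨0, h0lt⟩ : Fin n) ≤ e.symm j := by simp [Fin.le_def]
    have h2 := F2' h1
    rw [OrderIso.apply_symm_apply] at h2
    have hS0 : S 0 = q 0 := by
      simp only [S]; rw [Finset.sum_range_one]
    have hq0' : q 0 = p (e ⟨0, h0lt⟩) := by simp only [q]; rw [dif_pos h0lt]
    have hpos := hC.1 (e ⟨0, h0lt⟩)
    simp only [s, idx]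
    simp only [idx] at h2
    linarith
  -- the target "median" start
  let mfun : J → ℝ := fun j => d - S (idx j)
  have hJne : (univ : Finset J).Nonempty := univ_nonempty
  let A : ℝ := univ.sup' hJne (fun j => min (s j) (mfun j))
  let sstar : ℝ := max A 0
  have hsstar0 : 0 ≤ sstar := le_max_right _ _
  have hA_le : ∀ j, A ≤ max (s j) (mfun j) := by
    intro j
    apply Finset.sup'_le
    intro k _
    rcases le_total (C k) (C j) with h | h
    · exact le_trans (min_le_left _ _) (le_trans (hs_mono h) (le_max_left _ _))
    · have : mfun k ≤ mfun j := by
        have := hS_mono (hidx_mono h)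
        simp only [mfun]
        linarith
      exact le_trans (min_le_right _ _) (le_trans this (le_max_right _ _))
  have hA_ge : ∀ j, min (s j) (mfun j) ≤ A := fun j => Finset.le_sup' (fun j => min (s j) (mfun j)) (mem_univ j)
  -- key conditions on sstar
  have cond1 : ∀ j, s j < sstar → sstar ≤ mfun j := by
    intro j hj
    have h0 : 0 < sstar := lt_of_le_of_lt (hs_nonneg j) hj
    have hA_pos : 0 < A := by
      by_contra h
      push_neg at h
      have : sstar = 0 := max_eq_right h
      rw [this] at h0; exact lt_irrefl 0 h0
    have hsA : sstar = A := max_eq_left hA_pos.le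
    rw [hsA] at hj ⊢
    have := hA_le j
    rcases le_total (s j) (mfun j) with h | h
    · rw [max_eq_right h] at this; exact this
    · rw [max_eq_left h] at this; linarith
  have cond2 : ∀ j, sstar < s j → mfun j ≤ sstar := by
    intro j hj
    by_contra h
    push_neg at h
    have := hA_ge j
    have hA_le_s : A ≤ sstar := le_max_left _ _
    have : min (s j) (mfun j) ≤ sstar := le_trans this hA_le_s
    rcases le_total (s j) (mfun j) with h' | h'
    · rw [min_eq_left h'] at this; linarith
    · rw [min_eq_right h'] at this; linarith
  -- define the block schedule
  set C' : J → ℝ := fun j => sstar + S (idx j) with hC'_def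
  have hC'val : ∀ j, C' j = sstar + S (idx j) := fun j => rfl
  -- feasibility of C'
  have hC'feas : Feasible p C' := by
    constructor
    · intro j
      have := hqS (idx j)
      rw [hq_idx j] at this
      rw [hC'val]
      linarith
    · intro i j hij
      have hidx_ne : idx i ≠ idx j := by
        intro h
        apply hij
        have : e.symm i = e.symm j := Fin.ext h
        have := congrArg e this
        rwa [OrderIso.apply_symm_apply, OrderIso.apply_symm_apply] at this
      rcases lt_or_gt_of_ne hidx_ne with h | h
      · left
        have := hS_step h
        rw [hq_idx j] at this
        rw [hC'val, hC'val]
        linarith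
      · right
        have := hS_step h
        rw [hq_idx i] at this
        rw [hC'val, hC'val]
        linarith
  -- sup and inf of C'
  have hlast_lt : n - 1 < n := by omega
  let jlast : J := e ⟨n - 1, hlast_lt⟩
  let j0 : J := e ⟨0, h0lt⟩
  have hidx_last : idx jlast = n - 1 := by
    simp only [jlast, idx]
    rw [OrderIso.symm_apply_apply]
  have hidx_0 : idx j0 = 0 := by
    simp only [j0, idx]
    rw [OrderIso.symm_apply_apply]
  have hidx_le_last : ∀ j, idx j ≤ n - 1 := fun j => by have := hidx_lt j; omega
  have hS0q : S 0 = q 0 := by simp only [S]; rw [Finset.sum_range_one]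
  have hSn : S (n - 1) = ∑ j, p j := by
    have h1 : S (n - 1) = ∑ i ∈ Finset.range n, q i := by
      simp only [S]
      have hn1 : n - 1 + 1 = n := by omega
      rw [hn1]
    have h2 : ∑ i ∈ Finset.range n, q i = ∑ i : Fin n, q i.val :=
      (Fin.sum_univ_eq_sum_range (fun i => q i) n).symm
    have h3 : ∀ i : Fin n, q i.val = p (e i) := by
      intro i
      simp only [q]
      rw [dif_pos i.isLt]
    rw [h1, h2]
    rw [Finset.sum_congr rfl (fun i _ => h3 i)]
    exact Equiv.sum_comp e.toEquiv p
  have hsup' : univ.sup' hJne C' = sstar + S (n - 1) := by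
    apply le_antisymm
    · apply Finset.sup'_le
      intro j _
      rw [hC'val]
      have := hS_mono (hidx_le_last j)
      linarith
    · have := Finset.le_sup' C' (mem_univ jlast)
      rw [hC'val, hidx_last] at this
      exact this
  have hinf' : univ.inf' hJne (fun j => C' j - p j) = sstar := by
    apply le_antisymm
    · have := Finset.inf'_le (fun j => C' j - p j) (mem_univ j0)
      refine le_trans this ?_
      simp only [hC'val, hidx_0, hS0q]
      have : p j0 = q 0 := by rw [← hq_idx j0, hidx_0]
      linarith
    · apply Finset.le_inf'
      intro j _
      have h1 := hqS (idx j)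
      rw [hq_idx j] at h1
      simp only [hC'val]
      linarith
  have hblock : IsBlock p C' := by
    refine ⟨hC'feas, ?_⟩
    rw [hsup', hinf', hSn]
    ring
  -- penalty comparison
  have hterm : ∀ j, α j * max (d - C' j) 0 + β j * max (C' j - d) 0 =
      α j * max (mfun j - sstar) 0 + β j * max (sstar - mfun j) 0 := by
    intro j
    have h1 : d - C' j = mfun j - sstar := by rw [hC'val]; simp only [mfun]; ring
    have h2 : C' j - d = sstar - mfun j := by rw [hC'val]; simp only [mfun]; ring
    rw [h1, h2]
  have htermC : ∀ j, α j * max (d - C j) 0 + β j * max (C j - d) 0 =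
      α j * max (mfun j - s j) 0 + β j * max (s j - mfun j) 0 := by
    intro j
    have h1 : d - C j = mfun j - s j := by simp only [mfun, s]; ring
    have h2 : C j - d = s j - mfun j := by simp only [mfun, s]; ring
    rw [h1, h2]
  have hcases : ∀ j, s j = sstar ∨ (s j < sstar ∧ sstar ≤ mfun j) ∨
      (mfun j ≤ sstar ∧ sstar < s j) := by
    intro j
    rcases lt_trichotomy (s j) sstar with h | h | h
    · exact Or.inr (Or.inl ⟨h, cond1 j h⟩)
    · exact Or.inl h
    · exact Or.inr (Or.inr ⟨cond2 j h, h⟩)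
  have hple : penalty α β d C' ≤ penalty α β d C := by
    unfold penalty
    apply Finset.sum_le_sum
    intro j _
    rw [hterm j, htermC j]
    exact pen_le (α j) (β j) (mfun j) (s j) sstar (hα j) (hβ j) (hcases j)
  refine ⟨C', hblock, hple, ?_⟩
  -- strict part
  intro hα' hβ' hnb
  -- compute block quantity for C
  have hsupC : univ.sup' hJne C = C jlast := by
    apply le_antisymm
    · apply Finset.sup'_le
      intro j _
      have h1 : e.symm j ≤ (⟨n - 1, hlast_lt⟩ : Fin n) := by
        simp [Fin.le_def]
        have := hidx_lt j
        omega
      have := hce h1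
      rwa [OrderIso.apply_symm_apply] at this
    · exact Finset.le_sup' C (mem_univ jlast)
  have hinfC : univ.inf' hJne (fun j => C j - p j) = C j0 - p j0 := by
    apply le_antisymm
    · exact Finset.inf'_le _ (mem_univ j0)
    · apply Finset.le_inf'
      intro j _
      have h1 : (⟨0, h0lt⟩ : Fin n) ≤ e.symm j := by simp [Fin.le_def]
      have h2 := hce h1
      rw [OrderIso.apply_symm_apply] at h2
      have h3 : s j0 ≤ s j := hs_mono h2
      have h4 : C j - p j = s j + (S (idx j) - q (idx j)) := by
        simp only [s]
        rw [hq_idx j]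
        ring
      have h5 : C j0 - p j0 = s j0 := by
        simp only [s]
        rw [← hq_idx j0, hidx_0, hS0q]
      have h6 : 0 ≤ S (idx j) - q (idx j) := by
        have : S (idx j) = (∑ i ∈ Finset.range (idx j), q i) + q (idx j) :=
          Finset.sum_range_succ q _
        have h7 : 0 ≤ ∑ i ∈ Finset.range (idx j), q i := Finset.sum_nonneg fun i _ => hq0 i
        linarith
      rw [h4, h5]
      linarith
  have hCjlast : C jlast = s jlast + S (n - 1) := by
    simp only [s]
    rw [hidx_last]
    ring
  have hCj0 : C j0 - p j0 = s j0 := by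
    simp only [s]
    rw [← hq_idx j0, hidx_0, hS0q]
  have hs0_lt : s j0 < s jlast := by
    have hle : s j0 ≤ s jlast := by
      apply hs_mono
      have h1 : (⟨0, h0lt⟩ : Fin n) ≤ (⟨n - 1, hlast_lt⟩ : Fin n) := by simp [Fin.le_def]
      exact hce h1
    rcases lt_or_eq_of_le hle with h | h
    · exact h
    · exfalso
      apply hnb
      refine ⟨hC, ?_⟩
      rw [hsupC, hinfC, hCjlast, hCj0, ← h, hSn]
      ring
  -- pick the witness for strictness
  have hwit : ∃ j, (s j < sstar ∧ sstar ≤ mfun j) ∨ (mfun j ≤ sstar ∧ sstar < s j) := by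
    rcases eq_or_ne (s j0) sstar with h | h
    · refine ⟨jlast, ?_⟩
      have hlt : sstar < s jlast := by rw [← h]; exact hs0_lt
      exact Or.inr ⟨cond2 jlast hlt, hlt⟩
    · refine ⟨j0, ?_⟩
      rcases hcases j0 with h' | h' | h'
      · exact absurd h' h
      · exact Or.inl h'
      · exact Or.inr ⟨h'.1, h'.2⟩
  obtain ⟨jw, hjw⟩ := hwit
  unfold penalty
  apply Finset.sum_lt_sum
  · intro j _
    rw [hterm j, htermC j]
    exact pen_le (α j) (β j) (mfun j) (s j) sstar (hα j) (hβ j) (hcases j)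
  · refine ⟨jw, mem_univ jw, ?_⟩
    rw [hterm jw, htermC jw]
    exact pen_lt (α jw) (β jw) (mfun jw) (s jw) sstar (hα' jw) (hβ' jw) hjw

/-- (a) blocks are dominant when minimizing `f_{α,β}`;
(b) if all penalties are positive, blocks are strictly dominant: every minimizer is a block. -/
theorem stmt_5 {J : Type*} [Fintype J] [Nonempty J] (p : J → ℝ) (hp : ∀ j, 0 < p j)
    (d : ℝ) (α β : J → ℝ) (hα : ∀ j, 0 ≤ α j) (hβ : ∀ j, 0 ≤ β j) :
    (∀ C : J → ℝ, Feasible p C →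
      ∃ C' : J → ℝ, IsBlock p C' ∧ penalty α β d C' ≤ penalty α β d C) ∧
    ((∀ j, 0 < α j) → (∀ j, 0 < β j) →
      ∀ C : J → ℝ, Feasible p C →
        (∀ C' : J → ℝ, Feasible p C' → penalty α β d C ≤ penalty α β d C') →
        IsBlock p C) := by
  constructor
  · intro C hC
    obtain ⟨C', hb, hle, _⟩ := key_lemma p hp d α β hα hβ C hC
    exact ⟨C', hb, hle⟩
  · intro hα' hβ' C hC hmin
    by_contra hnb
    obtain ⟨C', hb, _, hstrict⟩ := key_lemma p hp d α β hα hβ C hC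
    have h1 := hstrict hα' hβ' hnb
    have h2 := hmin C' hb.1
    linarith
end

section
/- Let α, β ∈ ℝ^J with α_j ≥ 0 and β_j ≥ 0 for all j, and let C be a feasible schedule. Suppose that one of the following order violations occurs: either there exist i ≠ j with C_i < C_j ≤ d and α_i/p_i > α_j/p_j, or there exist i ≠ j with C_i − p_i ≥ d, C_j − p_j ≥ d, C_i < C_j and β_i/p_i < β_j/p_j. Then there exists a feasible schedule C' with f_{α,β}(C') < f_{α,β}(C). (Equivalently: the schedules in which the tasks ending before or at d are processed in order of nondecreasing α_j/p_j and the tasks starting at or after d are processed in order of nonincreasing β_j/p_j are strictly dominant.) -/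
/-- If `i` completes strictly before `j`, then in fact `C i + p j ≤ C j`. -/
lemma no_tie {J : Type*} {p C : J → ℝ} (hp : ∀ j, 0 < p j) (hC : Feasible p C)
    {i j : J} (hij : i ≠ j) (h : C i < C j) : C i + p j ≤ C j := by
  rcases hC.2 i j hij with h1 | h1
  · exact h1
  · exfalso; have := hp i; linarith

/-- Chain lemma: a ratio violation between any comparable pair inside a region `Q`
(closed under "in between") yields a ratio violation between an adjacent pair. -/
lemma chain_lemma {J : Type*} [Fintype J] [DecidableEq J] (C r : J → ℝ) (Q : J → Prop) :
    ∀ n : ℕ, ∀ i j : J,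
      (Finset.univ.filter (fun m => C i < C m ∧ C m < C j)).card ≤ n →
      C i < C j → Q i → Q j → r j < r i →
      (∀ m, C i < C m → C m < C j → Q m) →
      ∃ k l, C k < C l ∧ Q k ∧ Q l ∧ r l < r k ∧ ∀ m, ¬(C k < C m ∧ C m < C l) := by
  intro n
  induction n with
  | zero =>
    intro i j hcard hij Qi Qj hr _
    refine ⟨i, j, hij, Qi, Qj, hr, ?_⟩
    intro m hm
    have hmem : m ∈ Finset.univ.filter (fun m => C i < C m ∧ C m < C j) := by
      simp [hm.1, hm.2]
    have h0 := Finset.card_eq_zero.mp (Nat.le_zero.mp hcard)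
    rw [h0] at hmem
    exact absurd hmem (Finset.notMem_empty m)
  | succ n ih =>
    intro i j hcard hij Qi Qj hr HQ
    by_cases hB : ∃ m, C i < C m ∧ C m < C j
    · obtain ⟨m, hm1, hm2⟩ := hB
      have hmem : m ∈ Finset.univ.filter (fun x => C i < C x ∧ C x < C j) := by
        simp [hm1, hm2]
      have Qm : Q m := HQ m hm1 hm2
      by_cases hrm : r m < r i
      · -- recurse on (i, m)
        have hsub : (Finset.univ.filter (fun x => C i < C x ∧ C x < C m)) ⊆
            (Finset.univ.filter (fun x => C i < C x ∧ C x < C j)).erase m := by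
          intro x hx
          simp only [Finset.mem_filter, Finset.mem_univ, true_and] at hx
          rw [Finset.mem_erase]
          refine ⟨?_, ?_⟩
          · intro hxm; rw [hxm] at hx; exact absurd hx.2 (lt_irrefl _)
          · simp only [Finset.mem_filter, Finset.mem_univ, true_and]
            exact ⟨hx.1, hx.2.trans hm2⟩
        have hc : (Finset.univ.filter (fun x => C i < C x ∧ C x < C m)).card ≤ n := by
          have h1 := Finset.card_le_card hsub
          rw [Finset.card_erase_of_mem hmem] at h1
          omega
        exact ih i m hc hm1 Qi Qm hrm (fun x h1 h2 => HQ x h1 (h2.trans hm2))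
      · -- recurse on (m, j)
        push_neg at hrm
        have hrmj : r j < r m := lt_of_lt_of_le hr hrm
        have hsub : (Finset.univ.filter (fun x => C m < C x ∧ C x < C j)) ⊆
            (Finset.univ.filter (fun x => C i < C x ∧ C x < C j)).erase m := by
          intro x hx
          simp only [Finset.mem_filter, Finset.mem_univ, true_and] at hx
          rw [Finset.mem_erase]
          refine ⟨?_, ?_⟩
          · intro hxm; rw [hxm] at hx; exact absurd hx.1 (lt_irrefl _)
          · simp only [Finset.mem_filter, Finset.mem_univ, true_and]
            exact ⟨hm1.trans hx.1, hx.2⟩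
        have hc : (Finset.univ.filter (fun x => C m < C x ∧ C x < C j)).card ≤ n := by
          have h1 := Finset.card_le_card hsub
          rw [Finset.card_erase_of_mem hmem] at h1
          omega
        exact ih m j hc hm2 Qm Qj hrmj (fun x h1 h2 => HQ x (hm1.trans h1) h2)
    · push_neg at hB
      exact ⟨i, j, hij, Qi, Qj, hr, fun m hm => (hB m hm.1).not_gt hm.2⟩

/-- Splitting a sum over the whole type at two distinct elements. -/
lemma sum_split {J : Type*} [Fintype J] [DecidableEq J] (g : J → ℝ) {k l : J} (hkl : k ≠ l) :
    ∑ m, g m = g k + g l + ∑ m ∈ (Finset.univ.erase k).erase l, g m := by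
  have hl : l ∈ Finset.univ.erase k := by
    rw [Finset.mem_erase]; exact ⟨hkl.symm, Finset.mem_univ l⟩
  rw [← Finset.add_sum_erase _ g (Finset.mem_univ k), ← Finset.add_sum_erase _ g hl]
  ring

/-- Position of other tasks relative to an adjacent pair. -/
lemma other_pos {J : Type*} {p C : J → ℝ} (hp : ∀ j, 0 < p j) (hC : Feasible p C)
    {k l : J} (hkl : C k < C l) (hadj : ∀ m, ¬(C k < C m ∧ C m < C l))
    {m : J} (hmk : m ≠ k) (hml : m ≠ l) :
    C m + p k ≤ C k ∨ C l + p m ≤ C m := by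
  rcases hC.2 k m (fun h => hmk h.symm) with h1 | h1
  · -- C m ≥ C k + p m, so m is after k, hence after l
    right
    have hkm : C k < C m := by have := hp m; linarith
    have hlm : C l ≤ C m := by
      by_contra h
      exact hadj m ⟨hkm, lt_of_not_ge h⟩
    rcases hC.2 l m (fun h => hml h.symm) with h2 | h2
    · exact h2
    · exfalso; have := hp l; linarith
  · exact Or.inl h1

/-- Swap lemma, early case: adjacent pair `k, l` both ending by `d` in the wrong
`α/p` order can be swapped (flush right) to strictly decrease the penalty. -/
lemma swap1 {J : Type*} [Fintype J] [DecidableEq J] (p C α β : J → ℝ) (d : ℝ)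
    (hp : ∀ j, 0 < p j) (hα : ∀ j, 0 ≤ α j) (hC : Feasible p C)
    {k l : J} (hkl : C k < C l) (hld : C l ≤ d) (hr : α l * p k < α k * p l)
    (hadj : ∀ m, ¬(C k < C m ∧ C m < C l)) :
    ∃ C' : J → ℝ, Feasible p C' ∧ penalty α β d C' < penalty α β d C := by
  have hne : k ≠ l := by intro h; rw [h] at hkl; exact lt_irrefl _ hkl
  have hkl' : C k + p l ≤ C l := no_tie hp hC hne hkl
  have hpk := hp k
  have hpl := hp l
  have hCk := hC.1 k
  have hCl := hC.1 l
  set C' : J → ℝ := fun m => if m = k then C l else if m = l then C l - p k else C m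
    with hC'
  have ek : C' k = C l := by simp [hC']
  have el : C' l = C l - p k := by simp [hC', Ne.symm hne]
  have eo : ∀ m, m ≠ k → m ≠ l → C' m = C m := by
    intro m h1 h2; simp [hC', h1, h2]
  have key : ∀ m, m ≠ k → m ≠ l → C m + p k ≤ C k ∨ C l + p m ≤ C m :=
    fun m hmk hml => other_pos hp hC hkl hadj hmk hml
  refine ⟨C', ⟨?_, ?_⟩, ?_⟩
  · intro m
    rcases eq_or_ne m k with rfl | hmk
    · rw [ek]; linarith
    · rcases eq_or_ne m l with rfl | hml
      · rw [el]; linarith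
      · rw [eo m hmk hml]; exact hC.1 m
  · intro a b hab
    rcases eq_or_ne a k with rfl | hak
    · rcases eq_or_ne b l with rfl | hbl
      · right; rw [ek, el]; linarith
      · rcases key b (Ne.symm hab) hbl with h | h
        · right; rw [ek, eo b (Ne.symm hab) hbl]; linarith
        · left; rw [ek, eo b (Ne.symm hab) hbl]; linarith
    · rcases eq_or_ne a l with rfl | hal
      · rcases eq_or_ne b k with rfl | hbk
        · left; rw [ek, el]; linarith
        · rcases key b hbk (Ne.symm hab) with h | h
          · right; rw [el, eo b hbk (Ne.symm hab)]; linarith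
          · left; rw [el, eo b hbk (Ne.symm hab)]; linarith
      · rcases eq_or_ne b k with rfl | hbk
        · rcases key a hak hal with h | h
          · left; rw [ek, eo a hak hal]; linarith
          · right; rw [ek, eo a hak hal]; linarith
        · rcases eq_or_ne b l with rfl | hbl
          · rcases key a hak hal with h | h
            · left; rw [el, eo a hak hal]; linarith
            · right; rw [el, eo a hak hal]; linarith
          · rw [eo a hak hal, eo b hbk hbl]; exact hC.2 a b hab
  · unfold penalty
    rw [sum_split (fun m => α m * max (d - C' m) 0 + β m * max (C' m - d) 0) hne,
        sum_split (fun m => α m * max (d - C m) 0 + β m * max (C m - d) 0) hne]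
    have hrest :
        ∑ m ∈ (Finset.univ.erase k).erase l,
            (α m * max (d - C' m) 0 + β m * max (C' m - d) 0)
          = ∑ m ∈ (Finset.univ.erase k).erase l,
            (α m * max (d - C m) 0 + β m * max (C m - d) 0) := by
      apply Finset.sum_congr rfl
      intro m hm
      rw [Finset.mem_erase, Finset.mem_erase] at hm
      rw [eo m hm.2.1 hm.1]
    rw [hrest]
    have e1 : max (d - C l) 0 = d - C l := max_eq_left (by linarith)
    have e2 : max (C l - d) 0 = (0 : ℝ) := max_eq_right (by linarith)
    have e3 : max (d - (C l - p k)) 0 = d - (C l - p k) := max_eq_left (by linarith)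
    have e4 : max ((C l - p k) - d) 0 = (0 : ℝ) := max_eq_right (by linarith)
    have e5 : max (d - C k) 0 = d - C k := max_eq_left (by linarith)
    have e6 : max (C k - d) 0 = (0 : ℝ) := max_eq_right (by linarith)
    simp only [ek, el, e1, e2, e3, e4, e5, e6]
    have hint : α k * (C k + p l) ≤ α k * C l := mul_le_mul_of_nonneg_left hkl' (hα k)
    nlinarith [hint, hr]

/-- Swap lemma, late case: adjacent pair `k, l` both starting at or after `d` in the
wrong `β/p` order can be swapped (flush left) to strictly decrease the penalty. -/
lemma swap2 {J : Type*} [Fintype J] [DecidableEq J] (p C α β : J → ℝ) (d : ℝ)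
    (hp : ∀ j, 0 < p j) (hβ : ∀ j, 0 ≤ β j) (hC : Feasible p C)
    {k l : J} (hkl : C k < C l) (hdk : d ≤ C k - p k) (hdl : d ≤ C l - p l)
    (hr : β k * p l < β l * p k)
    (hadj : ∀ m, ¬(C k < C m ∧ C m < C l)) :
    ∃ C' : J → ℝ, Feasible p C' ∧ penalty α β d C' < penalty α β d C := by
  have hne : k ≠ l := by intro h; rw [h] at hkl; exact lt_irrefl _ hkl
  have hkl' : C k + p l ≤ C l := no_tie hp hC hne hkl
  have hpk := hp k
  have hpl := hp l
  have hCk := hC.1 k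
  have hCl := hC.1 l
  set C' : J → ℝ := fun m => if m = l then C k - p k + p l else if m = k then C k + p l else C m
    with hC'
  have ek : C' k = C k + p l := by simp [hC', hne]
  have el : C' l = C k - p k + p l := by simp [hC']
  have eo : ∀ m, m ≠ k → m ≠ l → C' m = C m := by
    intro m h1 h2; simp [hC', h1, h2]
  have key : ∀ m, m ≠ k → m ≠ l → C m + p k ≤ C k ∨ C l + p m ≤ C m :=
    fun m hmk hml => other_pos hp hC hkl hadj hmk hml
  refine ⟨C', ⟨?_, ?_⟩, ?_⟩
  · intro m
    rcases eq_or_ne m k with rfl | hmk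
    · rw [ek]; linarith
    · rcases eq_or_ne m l with rfl | hml
      · rw [el]; linarith
      · rw [eo m hmk hml]; exact hC.1 m
  · intro a b hab
    rcases eq_or_ne a k with rfl | hak
    · rcases eq_or_ne b l with rfl | hbl
      · right; rw [ek, el]; linarith
      · rcases key b (Ne.symm hab) hbl with h | h
        · right; rw [ek, eo b (Ne.symm hab) hbl]; linarith
        · left; rw [ek, eo b (Ne.symm hab) hbl]; linarith
    · rcases eq_or_ne a l with rfl | hal
      · rcases eq_or_ne b k with rfl | hbk
        · left; rw [ek, el]; linarith
        · rcases key b hbk (Ne.symm hab) with h | h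
          · right; rw [el, eo b hbk (Ne.symm hab)]; linarith
          · left; rw [el, eo b hbk (Ne.symm hab)]; linarith
      · rcases eq_or_ne b k with rfl | hbk
        · rcases key a hak hal with h | h
          · left; rw [ek, eo a hak hal]; linarith
          · right; rw [ek, eo a hak hal]; linarith
        · rcases eq_or_ne b l with rfl | hbl
          · rcases key a hak hal with h | h
            · left; rw [el, eo a hak hal]; linarith
            · right; rw [el, eo a hak hal]; linarith
          · rw [eo a hak hal, eo b hbk hbl]; exact hC.2 a b hab
  · unfold penalty
    rw [sum_split (fun m => α m * max (d - C' m) 0 + β m * max (C' m - d) 0) hne,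
        sum_split (fun m => α m * max (d - C m) 0 + β m * max (C m - d) 0) hne]
    have hrest :
        ∑ m ∈ (Finset.univ.erase k).erase l,
            (α m * max (d - C' m) 0 + β m * max (C' m - d) 0)
          = ∑ m ∈ (Finset.univ.erase k).erase l,
            (α m * max (d - C m) 0 + β m * max (C m - d) 0) := by
      apply Finset.sum_congr rfl
      intro m hm
      rw [Finset.mem_erase, Finset.mem_erase] at hm
      rw [eo m hm.2.1 hm.1]
    rw [hrest]
    have e1 : max (d - C k) 0 = (0 : ℝ) := max_eq_right (by linarith)
    have e2 : max (C k - d) 0 = C k - d := max_eq_left (by linarith)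
    have e3 : max (d - C l) 0 = (0 : ℝ) := max_eq_right (by linarith)
    have e4 : max (C l - d) 0 = C l - d := max_eq_left (by linarith)
    have e5 : max (d - (C k + p l)) 0 = (0 : ℝ) := max_eq_right (by linarith)
    have e6 : max ((C k + p l) - d) 0 = (C k + p l) - d := max_eq_left (by linarith)
    have e7 : max (d - (C k - p k + p l)) 0 = (0 : ℝ) := max_eq_right (by linarith)
    have e8 : max ((C k - p k + p l) - d) 0 = (C k - p k + p l) - d :=
      max_eq_left (by linarith)
    simp only [ek, el, e1, e2, e3, e4, e5, e6, e7, e8]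
    have hint : β l * (C k + p l) ≤ β l * C l := mul_le_mul_of_nonneg_left hkl' (hβ l)
    nlinarith [hint, hr]

/-- if a feasible schedule violates the V-shaped order (either two tasks
ending before or at `d` are not in nondecreasing order of `α_j/p_j`, or two tasks
starting at or after `d` are not in nonincreasing order of `β_j/p_j`), then there is a
feasible schedule with strictly smaller total penalty. -/
theorem stmt_7 {J : Type*} [Fintype J] (p : J → ℝ) (hp : ∀ j, 0 < p j)
    (d : ℝ) (α β : J → ℝ) (hα : ∀ j, 0 ≤ α j) (hβ : ∀ j, 0 ≤ β j)
    (C : J → ℝ) (hC : Feasible p C)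
    (hviol :
      (∃ i j : J, i ≠ j ∧ C i < C j ∧ C j ≤ d ∧ α i / p i > α j / p j) ∨
      (∃ i j : J, i ≠ j ∧ d ≤ C i - p i ∧ d ≤ C j - p j ∧ C i < C j ∧
        β i / p i < β j / p j)) :
    ∃ C' : J → ℝ, Feasible p C' ∧ penalty α β d C' < penalty α β d C := by
  classical
  rcases hviol with ⟨i, j, _, hlt, hjd, hr⟩ | ⟨i, j, _, hdi, hdj, hlt, hr⟩
  · -- early case
    obtain ⟨k, l, hkl, _, hQl, hrkl, hadj⟩ :=
      chain_lemma C (fun m => α m / p m) (fun m => C m ≤ d)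
        (Finset.univ.filter (fun m => C i < C m ∧ C m < C j)).card i j le_rfl
        hlt (le_of_lt (lt_of_lt_of_le hlt hjd)) hjd hr
        (fun m _ h2 => le_trans h2.le hjd)
    have hr' : α l * p k < α k * p l := (div_lt_div_iff₀ (hp l) (hp k)).mp hrkl
    exact swap1 p C α β d hp hα hC hkl hQl hr' (fun m hm => hadj m hm)
  · -- late case
    have hrneg : (fun m => -(β m / p m)) j < (fun m => -(β m / p m)) i := by
      simp only [neg_lt_neg_iff]; exact hr
    have HQ : ∀ m, C i < C m → C m < C j → d ≤ C m - p m := by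
      intro m h1 _
      have him : i ≠ m := by intro h; rw [h] at h1; exact lt_irrefl _ h1
      have h2 : C i + p m ≤ C m := no_tie hp hC him h1
      have := hp i
      linarith
    obtain ⟨k, l, hkl, hQk, hQl, hrkl, hadj⟩ :=
      chain_lemma C (fun m => -(β m / p m)) (fun m => d ≤ C m - p m)
        (Finset.univ.filter (fun m => C i < C m ∧ C m < C j)).card i j le_rfl
        hlt hdi hdj hrneg HQ
    have hrkl' : β k / p k < β l / p l := by
      simpa using neg_lt_neg_iff.mp hrkl
    have hr' : β k * p l < β l * p k := (div_lt_div_iff₀ (hp k) (hp l)).mp hrkl'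
    exact swap2 p C α β d hp hβ hC hkl hQk hQl hr' (fun m hm => hadj m hm)
end

section
/- Let C ∈ ℝ^J and set e_j = [d − C_j]^+ and t_j = [C_j − d]^+ for all j. Suppose there exists j ∈ J with C_j = d. Then C satisfies non-overlapping (for all i ≠ j, C_j ≥ C_i + p_j or C_i ≥ C_j + p_i) if and only if both of the following hold: (a) the vector (e_j + p_j)_{j ∈ E(C)}, indexed by E(C) with processing times (p_j)_{j∈E(C)}, satisfies positivity and non-overlapping; and (b) the vector (t_j)_{j ∈ T(C)}, indexed by T(C) with processing times (p_j)_{j∈T(C)}, satisfies positivity and non-overlapping. -/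
/-- for a schedule `C` with an on-time task, with `e_j = [d−C_j]^+` and
`t_j = [C_j−d]^+`, non-overlapping of `C` is equivalent to positivity and
non-overlapping of the vector `(e_j + p_j)` restricted to the early tasks
`E(C) = {j : C_j ≤ d}` together with positivity and non-overlapping of `t`
restricted to the tardy tasks `T(C) = {j : C_j > d}`. -/
theorem stmt_9 {J : Type*} [Fintype J] (p : J → ℝ) (hp : ∀ j, 0 < p j) (d : ℝ)
    (C e t : J → ℝ)
    (he : ∀ j, e j = max (d - C j) 0) (ht : ∀ j, t j = max (C j - d) 0)
    (hontime : ∃ j, C j = d) :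
    (∀ i j : J, i ≠ j → C j ≥ C i + p j ∨ C i ≥ C j + p i) ↔
      (((∀ j, C j ≤ d → p j ≤ e j + p j) ∧
        (∀ i j : J, C i ≤ d → C j ≤ d → i ≠ j →
          e j + p j ≥ (e i + p i) + p j ∨ e i + p i ≥ (e j + p j) + p i)) ∧
       ((∀ j, d < C j → p j ≤ t j) ∧
        (∀ i j : J, d < C i → d < C j → i ≠ j →
          t j ≥ t i + p j ∨ t i ≥ t j + p i))) := by
  have hee : ∀ j, C j ≤ d → e j = d - C j := fun j hj => by
    rw [he]; exact max_eq_left (by linarith)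
  have htt : ∀ j, d < C j → t j = C j - d := fun j hj => by
    rw [ht]; exact max_eq_left (by linarith)
  constructor
  · intro h
    refine ⟨⟨fun j hj => ?_, fun i j hi hj hij => ?_⟩, fun j hj => ?_, fun i j hi hj hij => ?_⟩
    · rw [hee j hj]; linarith
    · rw [hee i hi, hee j hj]
      rcases h i j hij with h1 | h2
      · right; linarith
      · left; linarith
    · obtain ⟨j0, hj0⟩ := hontime
      have hne : j0 ≠ j := fun hh => by rw [hh] at hj0; linarith
      rw [htt j hj]
      rcases h j0 j hne with h1 | h2
      · linarith
      · have := hp j0; linarith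
    · rw [htt i hi, htt j hj]
      rcases h i j hij with h1 | h2
      · left; linarith
      · right; linarith
  · rintro ⟨⟨-, heo⟩, htp, hto⟩ i j hij
    by_cases hi : C i ≤ d <;> by_cases hj : C j ≤ d
    · rcases heo i j hi hj hij with h1 | h2
      · rw [hee i hi, hee j hj] at h1; right; linarith
      · rw [hee i hi, hee j hj] at h2; left; linarith
    · push_neg at hj
      have := htp j hj; rw [htt j hj] at this; left; linarith
    · push_neg at hi
      have := htp i hi; rw [htt i hi] at this; right; linarith
    · push_neg at hi hj
      rcases hto i j hi hj hij with h1 | h2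
      · rw [htt i hi, htt j hj] at h1; left; linarith
      · rw [htt i hi, htt j hj] at h2; right; linarith
end

section
/- Let δ ∈ {0,1}^J and x ∈ ℝ^{J^<} satisfy the inequalities (x1–x4): x_{i,j} ≥ δ_i − δ_j, x_{i,j} ≥ δ_j − δ_i, x_{i,j} ≤ δ_i + δ_j, x_{i,j} ≤ 2 − (δ_i + δ_j) for all (i,j) ∈ J^<. (i) If e ∈ ℝ^J satisfies e_j ≥ 0 for all j ∈ J and e_j ≤ δ_j (p(J) − p_j) for all j ∈ E(δ), then: [for every S ⊆ J, ∑_{i∈S} p_i e_i ≥ ∑_{(i,j)∈S^<} p_i p_j (δ_i + δ_j − x_{i,j})/2] if and only if [for every S ⊆ E(δ), ∑_{i∈S} p_i (e_i + p_i) ≥ g_p(S)]. (ii) If t ∈ ℝ^J satisfies t_j ≥ 0 for all j ∈ J and t_j ≤ (1−δ_j) p(J) for all j ∈ T(δ), then: [for every S ⊆ J, ∑_{i∈S} p_i t_i ≥ ∑_{(i,j)∈S^<} p_i p_j (2 − (δ_i + δ_j) − x_{i,j})/2 + ∑_{i∈S} p_i² (1 − δ_i)] if and only if [for every S ⊆ T(δ),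 ∑_{i∈S} p_i t_i ≥ g_p(S)]. -/
/-- Sum over the ordered pairs `S^< = {(i,j) ∈ S² : i < j}`. -/
def pairSum {J : Type*} [LinearOrder J] (S : Finset J) (f : J → J → ℝ) : ℝ :=
  ∑ i ∈ S, ∑ j ∈ S.filter (fun j => i < j), f i j

/-!
At a 0/1 point the linearization is exact: the four inequalities force `x i j = |δ i - δ j|`.
Hence the pair terms of (S1) and (S2) collapse to `p i * p j` over the pairs of `S ∩ E(δ)`,
resp. `S ∩ T(δ)`, and the right-hand sides depend on `S` only through that intersection.
The left-hand sides are sums of nonnegative terms, increasing in `S`, so it suffices to test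
`S ⊆ E(δ)`, resp. `S ⊆ T(δ)`, where `g_p(S) = ∑_{S^<} p_i p_j + ∑_S p_i²` turns them into (Q).
-/

section PairSum

variable {J : Type*} [LinearOrder J]

lemma pairSum_congr {S : Finset J} {f g : J → J → ℝ}
    (h : ∀ i ∈ S, ∀ j ∈ S, i < j → f i j = g i j) : pairSum S f = pairSum S g :=
  Finset.sum_congr rfl fun i hi => Finset.sum_congr rfl fun j hj =>
    h i hi j (Finset.mem_filter.mp hj).1 (Finset.mem_filter.mp hj).2

lemma pairSum_eq_sum_sum_ite (S : Finset J) (f : J → J → ℝ) :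
    pairSum S f = ∑ i ∈ S, ∑ j ∈ S, if i < j then f i j else 0 := by
  simp only [pairSum, Finset.sum_filter]

lemma pairSum_filter (P : J → Prop) [DecidablePred P] (S : Finset J) (f : J → J → ℝ) :
    pairSum (S.filter P) f = pairSum S (fun i j => if P i ∧ P j then f i j else 0) := by
  simp only [pairSum_eq_sum_sum_ite, Finset.sum_filter]
  refine Finset.sum_congr rfl fun i _ => ?_
  by_cases hi : P i
  · refine (if_pos hi).trans (Finset.sum_congr rfl fun j _ => ?_)
    by_cases hj : P j <;> simp [hi, hj]
  · simp [hi]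

lemma two_mul_pairSum_mul (S : Finset J) (q : J → ℝ) :
    2 * pairSum S (fun i j => q i * q j) = (∑ i ∈ S, q i) ^ 2 - ∑ i ∈ S, q i ^ 2 := by
  have hsymm : pairSum S (fun i j => q i * q j)
      = ∑ i ∈ S, ∑ j ∈ S, if j < i then q i * q j else 0 := by
    rw [pairSum_eq_sum_sum_ite, Finset.sum_comm]
    simp only [mul_comm]
  have hdiag : ∑ i ∈ S, q i ^ 2 = ∑ i ∈ S, ∑ j ∈ S, if i = j then q i * q j else 0 := by
    simp [sq]
  have hsplit : ∀ i j, (if i < j then q i * q j else 0) + (if j < i then q i * q j else 0)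
      + (if i = j then q i * q j else 0) = q i * q j := by
    intro i j
    rcases lt_trichotomy i j with h | rfl | h
    · simp [h, h.ne, not_lt_of_gt h]
    · simp
    · simp [h, h.ne', not_lt_of_gt h]
  calc 2 * pairSum S (fun i j => q i * q j)
      = (∑ i ∈ S, ∑ j ∈ S, if i < j then q i * q j else 0)
        + ∑ i ∈ S, ∑ j ∈ S, if j < i then q i * q j else 0 := by
        rw [two_mul]; nth_rewrite 2 [hsymm]; rw [pairSum_eq_sum_sum_ite]
    _ = (∑ i ∈ S, ∑ j ∈ S, ((if i < j then q i * q j else 0)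
          + (if j < i then q i * q j else 0) + (if i = j then q i * q j else 0)))
        - ∑ i ∈ S, q i ^ 2 := by
        simp only [Finset.sum_add_distrib, hdiag]; ring
    _ = (∑ i ∈ S, q i) ^ 2 - ∑ i ∈ S, q i ^ 2 := by
        simp only [hsplit, sq, Finset.sum_mul_sum]

lemma gp_eq_pairSum_add_sum_sq (p : J → ℝ) (S : Finset J) :
    gp p S = pairSum S (fun i j => p i * p j) + ∑ i ∈ S, p i ^ 2 := by
  have := two_mul_pairSum_mul S p
  rw [gp]
  linarith

end PairSum

lemma linearization_exact {a b x : ℝ} (ha : a = 0 ∨ a = 1) (hb : b = 0 ∨ b = 1)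
    (hx : x ≥ a - b ∧ x ≥ b - a ∧ x ≤ a + b ∧ x ≤ 2 - (a + b)) :
    (a + b - x) / 2 = (if a = 1 ∧ b = 1 then 1 else 0) ∧
      (2 - (a + b) - x) / 2 = (if a = 0 ∧ b = 0 then 1 else 0) := by
  obtain ⟨h₁, h₂, h₃, h₄⟩ := hx
  rcases ha with rfl | rfl <;> rcases hb with rfl | rfl <;>
    refine ⟨?_, ?_⟩ <;> norm_num <;> linarith

lemma forall_sum_ge_iff_forall_subset {J : Type*} (P : J → Prop) [DecidablePred P]
    {c : J → ℝ} (hc : ∀ j, 0 ≤ c j) {F : Finset J → ℝ} (hF : ∀ S, F S = F (S.filter P)) :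
    (∀ S : Finset J, ∑ i ∈ S, c i ≥ F S) ↔
      ∀ S : Finset J, (∀ j ∈ S, P j) → ∑ i ∈ S, c i ≥ F S := by
  refine ⟨fun h S _ => h S, fun h S => ?_⟩
  calc F S = F (S.filter P) := hF S
    _ ≤ ∑ i ∈ S.filter P, c i := h _ fun j hj => (Finset.mem_filter.mp hj).2
    _ ≤ ∑ i ∈ S, c i :=
      Finset.sum_le_sum_of_subset_of_nonneg (Finset.filter_subset _ _) fun i _ _ => hc i

section Linearization

variable {J : Type*} [LinearOrder J] (p : J → ℝ) {δ : J → ℝ} {x : J → J → ℝ}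

lemma pairSum_linearized_early (hδ : ∀ j, δ j = 0 ∨ δ j = 1)
    (hx : ∀ i j : J, i < j →
      x i j ≥ δ i - δ j ∧ x i j ≥ δ j - δ i ∧ x i j ≤ δ i + δ j ∧ x i j ≤ 2 - (δ i + δ j))
    (S : Finset J) :
    pairSum S (fun i j => p i * p j * (δ i + δ j - x i j) / 2)
      = pairSum (S.filter (δ · = 1)) (fun i j => p i * p j) := by
  rw [pairSum_filter]
  refine pairSum_congr fun i _ j _ hij => ?_
  rw [mul_div_assoc, (linearization_exact (hδ i) (hδ j) (hx i j hij)).1]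
  simp

lemma pairSum_linearized_tardy_add_sum_sq (hδ : ∀ j, δ j = 0 ∨ δ j = 1)
    (hx : ∀ i j : J, i < j →
      x i j ≥ δ i - δ j ∧ x i j ≥ δ j - δ i ∧ x i j ≤ δ i + δ j ∧ x i j ≤ 2 - (δ i + δ j))
    (S : Finset J) :
    pairSum S (fun i j => p i * p j * (2 - (δ i + δ j) - x i j) / 2)
      + ∑ i ∈ S, (p i) ^ 2 * (1 - δ i) = gp p (S.filter (δ · = 0)) := by
  rw [gp_eq_pairSum_add_sum_sq, pairSum_filter, Finset.sum_filter]
  congr 1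
  · refine pairSum_congr fun i _ j _ hij => ?_
    rw [mul_div_assoc, (linearization_exact (hδ i) (hδ j) (hx i j hij)).2]
    simp
  · refine Finset.sum_congr rfl fun i _ => ?_
    rcases hδ i with h | h <;> simp [h]

end Linearization

/-- relation between the linearized non-overlapping inequalities (S1)
(resp. (S2)) and the Queyranne inequalities (Q) on the early set `E(δ)` (resp. the
tardy set `T(δ)`). -/
theorem stmt_11 {J : Type*} [Fintype J] [LinearOrder J]
    (p : J → ℝ) (hp : ∀ j, 0 < p j)
    (δ : J → ℝ) (hδ : ∀ j, δ j = 0 ∨ δ j = 1)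
    (x : J → J → ℝ)
    (hx : ∀ i j : J, i < j →
      x i j ≥ δ i - δ j ∧ x i j ≥ δ j - δ i ∧
      x i j ≤ δ i + δ j ∧ x i j ≤ 2 - (δ i + δ j))
    (e t : J → ℝ) :
    ((∀ j, 0 ≤ e j) → (∀ j, δ j = 1 → e j ≤ δ j * ((∑ k, p k) - p j)) →
      ((∀ S : Finset J,
          ∑ i ∈ S, p i * e i ≥ pairSum S (fun i j => p i * p j * (δ i + δ j - x i j) / 2))
        ↔ (∀ S : Finset J, (∀ j ∈ S, δ j = 1) →
            ∑ i ∈ S, p i * (e i + p i) ≥ gp p S))) ∧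
    ((∀ j, 0 ≤ t j) → (∀ j, δ j = 0 → t j ≤ (1 - δ j) * (∑ k, p k)) →
      ((∀ S : Finset J,
          ∑ i ∈ S, p i * t i ≥
            pairSum S (fun i j => p i * p j * (2 - (δ i + δ j) - x i j) / 2)
              + ∑ i ∈ S, (p i) ^ 2 * (1 - δ i))
        ↔ (∀ S : Finset J, (∀ j ∈ S, δ j = 0) →
            ∑ i ∈ S, p i * t i ≥ gp p S))) := by
  have hearly := pairSum_linearized_early p hδ hx
  have htardy := pairSum_linearized_tardy_add_sum_sq p hδ hx
  refine ⟨fun he _ => ?_, fun ht _ => ?_⟩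
  · rw [forall_sum_ge_iff_forall_subset (δ · = 1) (fun j => mul_nonneg (hp j).le (he j))
      fun S => by simp only [hearly, Finset.filter_filter, and_self]]
    refine forall₂_congr fun S hS => ?_
    rw [hearly, Finset.filter_true_of_mem hS, gp_eq_pairSum_add_sum_sq]
    simp only [mul_add, Finset.sum_add_distrib, sq, ge_iff_le, add_le_add_iff_right]
  · rw [forall_sum_ge_iff_forall_subset (δ · = 0) (fun j => mul_nonneg (hp j).le (ht j))
      fun S => by simp only [htardy, Finset.filter_filter, and_self]]
    refine forall₂_congr fun S hS => ?_
    rw [htardy, Finset.filter_true_of_mem hS]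
end

section
/- Let δ ∈ {0,1}^J, let x ∈ ℝ^{J^<} satisfy the inequalities (x1–x4), and let e, t ∈ ℝ^J satisfy, for all j ∈ J: e_j ≥ 0, e_j ≤ δ_j (p(J) − p_j), t_j ≥ 0, t_j ≤ (1−δ_j) p(J), together with the inequalities (S2): for every S ⊆ J, ∑_{i∈S} p_i t_i ≥ ∑_{(i,j)∈S^<} p_i p_j (2 − (δ_i + δ_j) − x_{i,j})/2 + ∑_{i∈S} p_i² (1 − δ_i). Define C_j = d − e_j + t_j for all j. Then E(δ) = E(C) and T(δ) = T(C). -/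
theorem pairSum_singleton {J : Type*} [LinearOrder J] (j : J) (f : J → J → ℝ) :
    pairSum {j} f = 0 := by
  simp [pairSum, Finset.filter_singleton]

theorem sq_mul_le_of_forall_pairSum_le {J : Type*} [LinearOrder J]
    {p t w : J → ℝ} {f : J → J → ℝ}
    (hS : ∀ S : Finset J, ∑ i ∈ S, p i * t i ≥ pairSum S f + ∑ i ∈ S, p i ^ 2 * w i)
    (j : J) : p j ^ 2 * w j ≤ p j * t j := by
  simpa [pairSum_singleton] using hS {j}

theorem le_of_sq_le_mul {a b : ℝ} (ha : 0 < a) (h : a ^ 2 ≤ a * b) : a ≤ b :=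
  le_of_mul_le_mul_left (by rwa [← sq]) ha

theorem iff_and_iff_of_eq_zero_or_eq_one {δ c d : ℝ} (hδ : δ = 0 ∨ δ = 1)
    (h₁ : δ = 1 → c ≤ d) (h₀ : δ = 0 → d < c) :
    (δ = 1 ↔ c ≤ d) ∧ (δ = 0 ↔ d < c) := by
  rcases hδ with rfl | rfl
  · simpa using h₀ rfl
  · simpa using h₁ rfl

theorem stmt_12_general {J : Type*} [Fintype J] [LinearOrder J]
    (p : J → ℝ) (hp : ∀ j, 0 < p j) (d : ℝ)
    (δ : J → ℝ) (hδ : ∀ j, δ j = 0 ∨ δ j = 1)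
    (x : J → J → ℝ)
    (e t : J → ℝ)
    (he0 : ∀ j, 0 ≤ e j) (he1 : ∀ j, e j ≤ δ j * ((∑ k, p k) - p j))
    (ht1 : ∀ j, t j ≤ (1 - δ j) * (∑ k, p k))
    (hS2 : ∀ S : Finset J,
      ∑ i ∈ S, p i * t i ≥
        pairSum S (fun i j => p i * p j * (2 - (δ i + δ j) - x i j) / 2)
          + ∑ i ∈ S, (p i) ^ 2 * (1 - δ i)) :
    (∀ j, δ j = 1 ↔ d - e j + t j ≤ d) ∧
    (∀ j, δ j = 0 ↔ d < d - e j + t j) := by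
  have early (j : J) (h : δ j = 1) : d - e j + t j ≤ d := by
    have ht : t j ≤ 0 := by simpa [h] using ht1 j
    linarith [he0 j]
  have tardy (j : J) (h : δ j = 0) : d < d - e j + t j := by
    have he : e j ≤ 0 := by simpa [h] using he1 j
    have hpt : p j ≤ t j :=
      le_of_sq_le_mul (hp j) (by simpa [h] using sq_mul_le_of_forall_pairSum_le hS2 j)
    linarith [hp j]
  exact ⟨fun j => (iff_and_iff_of_eq_zero_or_eq_one (hδ j) (early j) (tardy j)).1,
    fun j => (iff_and_iff_of_eq_zero_or_eq_one (hδ j) (early j) (tardy j)).2⟩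

/-- under the consistency inequalities (e0–t1), the linearization
inequalities (x1–x4), and the inequalities (S2), the partition given by `δ` coincides
with the early/tardy partition of the schedule `C_j = d − e_j + t_j`:
`E(δ) = E(C)` and `T(δ) = T(C)`. -/
theorem stmt_12 {J : Type*} [Fintype J] [LinearOrder J]
    (p : J → ℝ) (hp : ∀ j, 0 < p j) (d : ℝ)
    (δ : J → ℝ) (hδ : ∀ j, δ j = 0 ∨ δ j = 1)
    (x : J → J → ℝ)
    (hx : ∀ i j : J, i < j →
      x i j ≥ δ i - δ j ∧ x i j ≥ δ j - δ i ∧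
      x i j ≤ δ i + δ j ∧ x i j ≤ 2 - (δ i + δ j))
    (e t : J → ℝ)
    (he0 : ∀ j, 0 ≤ e j) (he1 : ∀ j, e j ≤ δ j * ((∑ k, p k) - p j))
    (ht0 : ∀ j, 0 ≤ t j) (ht1 : ∀ j, t j ≤ (1 - δ j) * (∑ k, p k))
    (hS2 : ∀ S : Finset J,
      ∑ i ∈ S, p i * t i ≥
        pairSum S (fun i j => p i * p j * (2 - (δ i + δ j) - x i j) / 2)
          + ∑ i ∈ S, (p i) ^ 2 * (1 - δ i)) :
    (∀ j, δ j = 1 ↔ d - e j + t j ≤ d) ∧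
    (∀ j, δ j = 0 ↔ d < d - e j + t j) :=
  stmt_12_general p hp d δ hδ x e t he0 he1 ht1 hS2
end
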